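/- arXiv:1110.5723 — 2 statements merged into one kernel-verified Lean document; each statement's English description precedes it below -/
import Mathlib

section
/- Fix an integer q ≥ 2, let (λ_i)_{i≥1} be positive reals with λ_i ≥ α > 0 for all i, let N^(n) → ∞, and let f^(n) : [N^(n)]^q → ℝ be symmetric vanishing on diagonals. If B_p(N^(n), f^(n)) → 0 as n → ∞ for every p = 1,…,q−1, then: (a) T(N^(n), f^(n), λ) = Σ_{(i₁,…,i_q) ∈ [N^(n)]^q} f^(n)(i₁,…,i_q)⁴ · Π_{l=1}^{q} λ_{i_l}^{−1} → 0; and (b) for every r = 1,…,q and every l = 1,…,min(r, q−1), W_{r,l}(N^(n), f^(n), λ) → 0. -/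
open MeasureTheory ProbabilityTheory Filter Finset Topology
open scoped ENNReal NNReal

noncomputable section

/-- The homogeneous sum of order `q` based on the kernel `f` and the first `N`
elements (indexed by `0, …, N-1`) of the sequence `X`. -/
def homSum {Ω : Type*} (q N : ℕ) (f : (Fin q → ℕ) → ℝ) (X : ℕ → Ω → ℝ) (ω : Ω) : ℝ :=
  ∑ i : Fin q → Fin N, f (fun k => (i k : ℕ)) * ∏ k, X (i k : ℕ) ω

/-- The kernel `f` is symmetric. -/
def SymmKernel (q : ℕ) (f : (Fin q → ℕ) → ℝ) : Prop :=
  ∀ (σ : Equiv.Perm (Fin q)) (i : Fin q → ℕ), f (i ∘ σ) = f i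

/-- The kernel `f` vanishes on diagonals. -/
def VanishOnDiag (q : ℕ) (f : (Fin q → ℕ) → ℝ) : Prop :=
  ∀ i : Fin q → ℕ, ¬ Function.Injective i → f i = 0

/-- Sum of the squares of the kernel `f` over `[N]^q`. -/
def sqSum (q N : ℕ) (f : (Fin q → ℕ) → ℝ) : ℝ :=
  ∑ i : Fin q → Fin N, (f (fun k => (i k : ℕ)))^2

/-- Convergence in distribution: the laws of `X n` converge weakly to `ν`. -/
def TendstoInDistrib {Ω E : Type*} [MeasurableSpace Ω] [MeasurableSpace E] [TopologicalSpace E]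
    (μ : Measure Ω) (X : ℕ → Ω → E) (ν : Measure E) : Prop :=
  ∀ φ : BoundedContinuousFunction E ℝ,
    Tendsto (fun n => ∫ ω, φ (X n ω) ∂μ) atTop (𝓝 (∫ x, φ x ∂ν))

/-- `P` has the law of `(Y - λ)/√λ`, where `Y` is Poisson with parameter `λ`. -/
def HasStdPoissonLaw {Ω : Type*} [MeasurableSpace Ω] (μ : Measure Ω) (lam : ℝ)
    (P : Ω → ℝ) : Prop :=
  Measure.map P μ =
    Measure.map (fun k : ℕ => ((k : ℝ) - lam) / Real.sqrt lam)
      (poissonMeasure lam.toNNReal)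

/-- The law of a Rademacher random variable. -/
def radLaw : Measure ℝ :=
  ((1 : ℝ≥0∞)/2) • Measure.dirac (1 : ℝ) + ((1 : ℝ≥0∞)/2) • Measure.dirac (-1 : ℝ)

/-- Concatenation of two tuples (padded with `0`). -/
def tcat {p m q : ℕ} (a : Fin p → ℕ) (b : Fin m → ℕ) : Fin q → ℕ := fun t =>
  if h : (t : ℕ) < p then a ⟨t, h⟩
  else if h2 : (t : ℕ) - p < m then b ⟨(t : ℕ) - p, h2⟩ else 0

/-- Concatenation of three tuples (padded with `0`). -/
def tcat3 {l m r q : ℕ} (a : Fin l → ℕ) (b : Fin m → ℕ) (c : Fin r → ℕ) : Fin q → ℕ := fun t =>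
  if h : (t : ℕ) < l then a ⟨t, h⟩
  else if h2 : (t : ℕ) - l < m then b ⟨(t : ℕ) - l, h2⟩
  else if h3 : (t : ℕ) - l - m < r then c ⟨(t : ℕ) - l - m, h3⟩ else 0

/-- The contraction quantity `B_p(N, f)`. -/
def Bcontr (q p N : ℕ) (f : (Fin q → ℕ) → ℝ) : ℝ :=
  ∑ k : Fin (q - p) → Fin N, ∑ k' : Fin (q - p) → Fin N,
    (∑ a : Fin p → Fin N,
      f (tcat (fun t => (a t : ℕ)) (fun t => (k t : ℕ))) *
      f (tcat (fun t => (a t : ℕ)) (fun t => (k' t : ℕ))))^2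

/-- The weighted contraction quantity `W_{r,l}(N, f, λ)`. -/
def Wcontr (q r l N : ℕ) (lam : ℕ → ℝ) (f : (Fin q → ℕ) → ℝ) : ℝ :=
  ∑ b : Fin (r - l) → Fin N, ∑ i : Fin (q - r) → Fin N, ∑ j : Fin (q - r) → Fin N,
    (∏ u, (lam (b u : ℕ))⁻¹) *
    (∑ a : Fin l → Fin N,
      f (tcat3 (fun t => (a t : ℕ)) (fun t => (b t : ℕ)) (fun t => (i t : ℕ))) *
      f (tcat3 (fun t => (a t : ℕ)) (fun t => (b t : ℕ)) (fun t => (j t : ℕ))))^2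

/-- A centered Gaussian measure on `ℝ^d` with covariance matrix `C`, characterized by
the fact that each linear functional is pushed forward to a one-dimensional Gaussian. -/
def IsCenteredGaussianVec {d : ℕ} (ν : Measure (Fin d → ℝ))
    (C : Matrix (Fin d) (Fin d) ℝ) : Prop :=
  IsProbabilityMeasure ν ∧ ∀ t : Fin d → ℝ,
    Measure.map (fun x => ∑ j, t j * x j) ν =
      gaussianReal 0 (∑ i, ∑ j, t i * C i j * t j).toNNReal

/-- A sequence of i.i.d. standard Gaussian random variables. -/
def IsStdGaussianSeq {Ω : Type*} [MeasurableSpace Ω] (μ : Measure Ω) (G : ℕ → Ω → ℝ) : Prop :=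
  (∀ i, Measurable (G i)) ∧ iIndepFun G μ ∧
    ∀ i, Measure.map (G i) μ = gaussianReal 0 1

/-- A Rademacher sequence: i.i.d. with `P(e i = 1) = P(e i = -1) = 1/2`. -/
def IsRademacherSeq {Ω : Type*} [MeasurableSpace Ω] (μ : Measure Ω) (e : ℕ → Ω → ℝ) : Prop :=
  (∀ i, Measurable (e i)) ∧ iIndepFun e μ ∧
    ∀ i, Measure.map (e i) μ = radLaw

/-- A sequence of independent centered random variables with unit variance. -/
def IsIndepCenteredUnitVar {Ω : Type*} [MeasurableSpace Ω] (μ : Measure Ω)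
    (X : ℕ → Ω → ℝ) : Prop :=
  (∀ i, Measurable (X i)) ∧ iIndepFun X μ ∧
    (∀ i, ∫ ω, X i ω ∂μ = 0) ∧ (∀ i, ∫ ω, (X i ω)^2 ∂μ = 1)

/-- A sequence of i.i.d. centered random variables with unit variance. -/
def IsIIDCenteredUnitVar {Ω : Type*} [MeasurableSpace Ω] (μ : Measure Ω)
    (X : ℕ → Ω → ℝ) : Prop :=
  IsIndepCenteredUnitVar μ X ∧ ∀ i j, Measure.map (X i) μ = Measure.map (X j) μ

/-- `sup_i E|X_i|^m < ∞`. -/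
def UnifMomentBound {Ω : Type*} [MeasurableSpace Ω] (μ : Measure Ω)
    (X : ℕ → Ω → ℝ) (m : ℝ) : Prop :=
  ∃ C : ℝ, ∀ i, ∫⁻ ω, ENNReal.ofReal (|X i ω| ^ m) ∂μ ≤ ENNReal.ofReal C

/-- A sequence of independent normalized Poisson random variables, `P i` having the law
of `(Y i - lam i)/√(lam i)` with `Y i` Poisson of parameter `lam i`. -/
def IsPoissonSeq {Ω : Type*} [MeasurableSpace Ω] (μ : Measure Ω) (lam : ℕ → ℝ)
    (P : ℕ → Ω → ℝ) : Prop :=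
  (∀ i, Measurable (P i)) ∧ iIndepFun P μ ∧
    ∀ i, HasStdPoissonLaw μ (lam i) (P i)

/-! Both quantities are dominated by the contractions `B_l`. After bounding every weight
`λ⁻¹` by `α⁻¹`, the sum `Σ_{b,i,j} (Σ_a f(a,b,i) f(a,b,j))²` underlying `W_{r,l}` is the part of
`B_l` with `k = (b,i)` and `k' = (b,j)`, and `Σ f⁴ = Σ_k Σ_a (f(a,k)²)² ≤ Σ_k (Σ_a f(a,k)²)²` is
the diagonal `k = k'` of `B_1`. -/

section Tuples

variable {α : Type*} {p m q N : ℕ}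

def tupleAppend (h : p + m = q) : (Fin p → α) × (Fin m → α) ≃ (Fin q → α) :=
  (Fin.appendEquiv p m).trans ((finCongr h).arrowCongr (Equiv.refl α))

theorem tcat_eq_tupleAppend (h : p + m = q) (a : Fin p → Fin N) (k : Fin m → Fin N) :
    tcat (q := q) (fun t => (a t : ℕ)) (fun t => (k t : ℕ)) =
      fun t => ((tupleAppend h (a, k) t : Fin N) : ℕ) := by
  funext t
  simp only [tcat, tupleAppend, Equiv.trans_apply, Fin.appendEquiv_apply, Equiv.arrowCongr_apply,
    Equiv.coe_refl, Function.comp_apply, id, finCongr_symm, finCongr_apply]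
  split_ifs with h1 h2
  · rw [show Fin.cast h.symm t = Fin.castAdd m ⟨t, h1⟩ from rfl, Fin.append_left]
  · rw [show Fin.cast h.symm t = Fin.natAdd p ⟨t - p, h2⟩ from Fin.ext (by simp; omega),
      Fin.append_right]
  · omega

theorem sum_tcat (h : p + m = q) (g : (Fin q → ℕ) → ℝ) :
    ∑ a : Fin p → Fin N, ∑ k : Fin m → Fin N, g (tcat (fun t => (a t : ℕ)) (fun t => (k t : ℕ))) =
      ∑ i : Fin q → Fin N, g (fun t => (i t : ℕ)) := by
  simp_rw [tcat_eq_tupleAppend h]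
  rw [← Fintype.sum_prod_type']
  exact (tupleAppend (α := Fin N) h).sum_comp (fun i => g fun t => (i t : ℕ))

theorem tcat3_eq_tcat_tcat {l r : ℕ} (a : Fin l → ℕ) (b : Fin m → ℕ) (c : Fin r → ℕ) :
    tcat3 (q := q) a b c = tcat (m := q - l) a (tcat b c) := by
  funext t
  have := t.isLt
  simp only [tcat3, tcat]
  split_ifs <;> first | rfl | omega

end Tuples

theorem Fintype.sum_comp_le_sum_of_injective {X Y M : Type*} [Fintype X] [Fintype Y]
    [AddCommMonoid M] [PartialOrder M] [IsOrderedAddMonoid M] {φ : X → Y}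
    (hφ : Function.Injective φ) {g : Y → M} (hg : ∀ y, 0 ≤ g y) :
    ∑ x, g (φ x) ≤ ∑ y, g y :=
  (Finset.sum_map univ ⟨φ, hφ⟩ g).symm.trans_le (sum_le_univ_sum_of_nonneg hg)

theorem sum_sum_sum_comp_le_sum_sum {B I Y M : Type*} [Fintype B] [Fintype I] [Fintype Y]
    [AddCommMonoid M] [PartialOrder M] [IsOrderedAddMonoid M]
    {c : B → I → Y} (hc : Function.Injective (Function.uncurry c)) {H : Y → Y → M}
    (hH : ∀ y y', 0 ≤ H y y') :
    ∑ b, ∑ i, ∑ j, H (c b i) (c b j) ≤ ∑ y, ∑ y', H y y' := by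
  have hpair : Function.Injective fun x : B × I × I => (c x.1 x.2.1, c x.1 x.2.2) := by
    rintro ⟨b, i, j⟩ ⟨b', i', j'⟩ hx
    obtain ⟨hbi, hj⟩ := Prod.mk.inj hx
    obtain ⟨rfl, rfl⟩ := Prod.mk.inj (hc (show Function.uncurry c (b, i) = _ from hbi))
    obtain ⟨-, rfl⟩ := Prod.mk.inj (hc (show Function.uncurry c (b, j) = _ from hj))
    rfl
  simpa only [Fintype.sum_prod_type] using
    Fintype.sum_comp_le_sum_of_injective hpair (g := fun y : Y × Y => H y.1 y.2) fun y => hH _ _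

theorem prod_inv_le_inv_pow {ι : Type*} [Fintype ι] {lam : ℕ → ℝ} {α : ℝ} (hα : 0 < α)
    (hlam : ∀ i, α ≤ lam i) (x : ι → ℕ) :
    ∏ u, (lam (x u))⁻¹ ≤ α⁻¹ ^ Fintype.card ι := by
  calc ∏ u, (lam (x u))⁻¹ ≤ ∏ _u : ι, α⁻¹ :=
        prod_le_prod (fun u _ => inv_nonneg.2 (hα.le.trans (hlam _)))
          fun u _ => inv_anti₀ hα (hlam _)
    _ = α⁻¹ ^ Fintype.card ι := by rw [prod_const, card_univ]

section Contractions

variable {q N : ℕ} (f : (Fin q → ℕ) → ℝ)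

theorem sum_pow_four_le_Bcontr {p : ℕ} (hp : p ≤ q) :
    ∑ i : Fin q → Fin N, f (fun t => (i t : ℕ)) ^ 4 ≤ Bcontr q p N f := by
  set F : (Fin p → Fin N) → (Fin (q - p) → Fin N) → ℝ :=
    fun a k => f (tcat (fun t => (a t : ℕ)) (fun t => (k t : ℕ)))
  calc ∑ i : Fin q → Fin N, f (fun t => (i t : ℕ)) ^ 4
      = ∑ k, ∑ a, (F a k ^ 2) ^ 2 := by
        rw [← sum_tcat (by omega : p + (q - p) = q) fun v => f v ^ 4, sum_comm]
        simp only [F, ← pow_mul]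
    _ ≤ ∑ k, (∑ a, F a k * F a k) ^ 2 :=
        sum_le_sum fun k _ => by
          simpa only [sq] using sum_sq_le_sq_sum_of_nonneg fun a (_ : a ∈ univ) => sq_nonneg (F a k)
    _ ≤ Bcontr q p N f :=
        sum_le_sum fun k _ => single_le_sum (f := fun k' => (∑ a, F a k * F a k') ^ 2)
          (fun _ _ => sq_nonneg _) (mem_univ k)

theorem sum_contraction_sq_le_Bcontr {r l : ℕ} (hlr : l ≤ r) (hrq : r ≤ q) :
    ∑ b : Fin (r - l) → Fin N, ∑ i : Fin (q - r) → Fin N, ∑ j : Fin (q - r) → Fin N,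
      (∑ a : Fin l → Fin N,
        f (tcat3 (fun t => (a t : ℕ)) (fun t => (b t : ℕ)) (fun t => (i t : ℕ))) *
        f (tcat3 (fun t => (a t : ℕ)) (fun t => (b t : ℕ)) (fun t => (j t : ℕ)))) ^ 2
      ≤ Bcontr q l N f := by
  have hm : r - l + (q - r) = q - l := by omega
  simp only [tcat3_eq_tcat_tcat, tcat_eq_tupleAppend hm]
  exact sum_sum_sum_comp_le_sum_sum (c := fun b i => tupleAppend (α := Fin N) hm (b, i))
    (H := fun k k' => (∑ a : Fin l → Fin N,
      f (tcat (fun t => (a t : ℕ)) (fun t => (k t : ℕ))) *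
      f (tcat (fun t => (a t : ℕ)) (fun t => (k' t : ℕ)))) ^ 2)
    (tupleAppend hm).injective fun _ _ => sq_nonneg _

variable {lam : ℕ → ℝ} {α : ℝ}

theorem sum_pow_four_mul_prod_inv_le (hα : 0 < α) (hlam : ∀ i, α ≤ lam i) {p : ℕ} (hp : p ≤ q) :
    ∑ i : Fin q → Fin N, f (fun k => (i k : ℕ)) ^ 4 * ∏ u, (lam (i u : ℕ))⁻¹ ≤
      α⁻¹ ^ q * Bcontr q p N f := by
  calc ∑ i : Fin q → Fin N, f (fun k => (i k : ℕ)) ^ 4 * ∏ u, (lam (i u : ℕ))⁻¹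
      ≤ ∑ i : Fin q → Fin N, f (fun k => (i k : ℕ)) ^ 4 * α⁻¹ ^ q := by
        gcongr with i
        simpa using prod_inv_le_inv_pow hα hlam fun u => (i u : ℕ)
    _ ≤ α⁻¹ ^ q * Bcontr q p N f := by
        rw [← sum_mul, mul_comm]
        gcongr
        exact sum_pow_four_le_Bcontr f hp

theorem Wcontr_le (hα : 0 < α) (hlam : ∀ i, α ≤ lam i) {r l : ℕ} (hlr : l ≤ r) (hrq : r ≤ q) :
    Wcontr q r l N lam f ≤ α⁻¹ ^ (r - l) * Bcontr q l N f := by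
  calc Wcontr q r l N lam f
      ≤ ∑ b : Fin (r - l) → Fin N, ∑ i : Fin (q - r) → Fin N, ∑ j : Fin (q - r) → Fin N,
          α⁻¹ ^ (r - l) * (∑ a : Fin l → Fin N,
            f (tcat3 (fun t => (a t : ℕ)) (fun t => (b t : ℕ)) (fun t => (i t : ℕ))) *
            f (tcat3 (fun t => (a t : ℕ)) (fun t => (b t : ℕ)) (fun t => (j t : ℕ)))) ^ 2 := by
        unfold Wcontr
        gcongr with b
        simpa using prod_inv_le_inv_pow hα hlam fun u => (b u : ℕ)
    _ ≤ α⁻¹ ^ (r - l) * Bcontr q l N f := by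
        simp only [← mul_sum]
        gcongr
        exact sum_contraction_sq_le_Bcontr f hlr hrq

theorem Wcontr_nonneg (hlam : ∀ i, 0 ≤ lam i) (r l : ℕ) : 0 ≤ Wcontr q r l N lam f :=
  sum_nonneg fun _ _ => sum_nonneg fun _ _ => sum_nonneg fun _ _ =>
    mul_nonneg (prod_nonneg fun _ _ => inv_nonneg.2 (hlam _)) (sq_nonneg _)

end Contractions

theorem contractions_vanish_general
    (q : ℕ) (hq : 2 ≤ q)
    (lam : ℕ → ℝ) (α : ℝ) (hα : 0 < α) (hlam : ∀ i, α ≤ lam i)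
    (N : ℕ → ℕ)
    (f : ℕ → (Fin q → ℕ) → ℝ)
    (hB : ∀ p, 1 ≤ p → p ≤ q - 1 → Tendsto (fun n => Bcontr q p (N n) (f n)) atTop (𝓝 0)) :
    Tendsto (fun n => ∑ i : Fin q → Fin (N n),
        (f n (fun k => (i k : ℕ)))^4 * ∏ l, (lam (i l : ℕ))⁻¹) atTop (𝓝 0) ∧
    ∀ r, 1 ≤ r → r ≤ q → ∀ l, 1 ≤ l → l ≤ min r (q - 1) →
      Tendsto (fun n => Wcontr q r l (N n) lam (f n)) atTop (𝓝 0) := by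
  have hlam0 : ∀ i, 0 ≤ lam i := fun i => hα.le.trans (hlam i)
  refine ⟨?_, fun r _ hrq l hl hlr => ?_⟩
  · refine squeeze_zero (fun n => sum_nonneg fun _ _ => mul_nonneg (by positivity)
      (prod_nonneg fun _ _ => inv_nonneg.2 (hlam0 _)))
      (fun n => sum_pow_four_mul_prod_inv_le (f n) hα hlam (p := 1) (by omega)) ?_
    simpa using (hB 1 le_rfl (by omega)).const_mul (α⁻¹ ^ q)
  · obtain ⟨hlr, hlq⟩ := le_min_iff.1 hlr
    refine squeeze_zero (fun n => Wcontr_nonneg (f n) hlam0 r l)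
      (fun n => Wcontr_le (f n) hα hlam hlr hrq) ?_
    simpa using (hB l hl hlq).const_mul (α⁻¹ ^ (r - l))

/-- Key technical proposition: if all the contraction quantities `B_p` vanish
asymptotically, then so do the `L⁴` norm of the kernels and all the weighted star
contractions `W_{r,l}`. -/
theorem contractions_vanish
    (q : ℕ) (hq : 2 ≤ q)
    (lam : ℕ → ℝ) (α : ℝ) (hα : 0 < α) (hlam : ∀ i, α ≤ lam i)
    (N : ℕ → ℕ) (hN : Tendsto N atTop atTop)
    (f : ℕ → (Fin q → ℕ) → ℝ)
    (hsymm : ∀ n, SymmKernel q (f n)) (hdiag : ∀ n, VanishOnDiag q (f n))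
    (hB : ∀ p, 1 ≤ p → p ≤ q - 1 → Tendsto (fun n => Bcontr q p (N n) (f n)) atTop (𝓝 0)) :
    Tendsto (fun n => ∑ i : Fin q → Fin (N n),
        (f n (fun k => (i k : ℕ)))^4 * ∏ l, (lam (i l : ℕ))⁻¹) atTop (𝓝 0) ∧
    ∀ r, 1 ≤ r → r ≤ q → ∀ l, 1 ≤ l → l ≤ min r (q - 1) →
      Tendsto (fun n => Wcontr q r l (N n) lam (f n)) atTop (𝓝 0) :=
  contractions_vanish_general q hq lam α hα hlam N f hB

end
end

section
/- For every α > 0 and every real q ≥ 1, the function λ ↦ E[|Y_λ − λ|^q]/λ^{q/2} is bounded on [α, ∞), where Y_λ is a Poisson random variable with parameter λ; that is, there exists M < ∞ such that Σ_{n=0}^{∞} e^{−λ} λ^n/n! · |n − λ|^q ≤ M·λ^{q/2} for all λ ≥ α. -/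
open MeasureTheory ProbabilityTheory Filter Finset Topology
open scoped ENNReal NNReal

noncomputable section

/-! The centered Poisson variable has moment generating function
`E[exp (c (Y_λ - λ))] = exp (λ (e^c - 1 - c)) ≤ exp (λ c² e^|c|)`, which stays bounded for
`c = ±1/√λ` and `λ ≥ α`. Since `|t|^q ≤ ⌈q⌉! (e^t + e^(-t))`, taking `t = (Y_λ - λ)/√λ` bounds
`E|Y_λ - λ|^q / λ^(q/2)` by `2 ⌈q⌉! exp (exp (1/√α))`. -/

section PoissonMoment

open Real Nat

/-- The Poisson weights `P(Y_λ = n)`, for a real parameter `λ`. -/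
def poissonWeight (lam : ℝ) (n : ℕ) : ℝ := exp (-lam) * lam ^ n / n !

/-- The moment generating function `E[exp (c (Y_λ - λ))]` of a centered Poisson variable. -/
def centeredPoissonMgf (lam c : ℝ) : ℝ := exp (lam * (exp c - 1 - c))

lemma poissonWeight_nonneg {lam : ℝ} (hlam : 0 ≤ lam) (n : ℕ) : 0 ≤ poissonWeight lam n := by
  unfold poissonWeight; positivity

lemma hasSum_poissonWeight_mul_exp (lam c : ℝ) :
    HasSum (fun n : ℕ => poissonWeight lam n * exp (c * (n - lam)))
      (centeredPoissonMgf lam c) := by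
  have hexp := NormedSpace.expSeries_div_hasSum_exp (lam * exp c)
  rw [← exp_eq_exp_ℝ] at hexp
  have hmgf : centeredPoissonMgf lam c = exp (-lam - c * lam) * exp (lam * exp c) := by
    rw [centeredPoissonMgf, ← exp_add]
    ring_nf
  rw [hmgf]
  refine (hexp.mul_left _).congr_fun fun n => ?_
  rw [poissonWeight, mul_pow, ← exp_nat_mul, mul_comm (n : ℝ) c, mul_sub,
    sub_eq_add_neg (c * n), exp_add, sub_eq_add_neg (-lam), exp_add]
  ring

lemma exp_sub_one_sub_le_sq_mul_exp_abs (c : ℝ) : exp c - 1 - c ≤ c ^ 2 * exp |c| := by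
  have h₁ := add_one_le_exp c
  have h₂ := add_one_le_exp (-c)
  have hprod : exp c * exp (-c) = 1 := by rw [← exp_add, add_neg_cancel, exp_zero]
  rcases le_or_gt 0 c with hc | hc
  · rw [abs_of_nonneg hc]
    nlinarith [exp_pos c, exp_pos (-c), mul_le_mul_of_nonneg_left h₂ (exp_pos c).le]
  · rw [abs_of_neg hc]
    nlinarith [exp_pos c, exp_pos (-c)]

lemma rpow_le_factorial_mul_exp {x q : ℝ} (hx : 0 ≤ x) (hq : 0 ≤ q) :
    x ^ q ≤ (⌈q⌉₊)! * exp x := by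
  have hfact : (1 : ℝ) ≤ (⌈q⌉₊)! := mod_cast Nat.one_le_iff_ne_zero.mpr (factorial_ne_zero _)
  rcases le_or_gt x 1 with hx1 | hx1
  · calc x ^ q ≤ 1 := rpow_le_one hx hx1 hq
      _ ≤ (⌈q⌉₊)! * exp x := one_le_mul_of_one_le_of_one_le hfact (one_le_exp hx)
  · calc x ^ q ≤ x ^ (⌈q⌉₊ : ℝ) := rpow_le_rpow_of_exponent_le hx1.le (le_ceil q)
      _ = (⌈q⌉₊)! * (x ^ ⌈q⌉₊ / (⌈q⌉₊)!) := by
        rw [rpow_natCast, mul_div_cancel₀ _ (by positivity)]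
      _ ≤ (⌈q⌉₊)! * exp x := by gcongr; exact pow_div_factorial_le_exp _ hx _

lemma abs_rpow_le_factorial_mul_exp_add_exp {q : ℝ} (hq : 0 ≤ q) (t : ℝ) :
    |t| ^ q ≤ (⌈q⌉₊)! * (exp t + exp (-t)) := by
  refine (rpow_le_factorial_mul_exp (abs_nonneg t) hq).trans ?_
  gcongr
  rcases abs_cases t with ⟨ht, -⟩ | ⟨ht, -⟩ <;> rw [ht] <;> linarith [exp_pos t, exp_pos (-t)]

lemma centeredPoissonMgf_le {lam : ℝ} (hlam : 0 ≤ lam) (c : ℝ) :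
    centeredPoissonMgf lam c ≤ exp (lam * c ^ 2 * exp |c|) := by
  rw [centeredPoissonMgf, exp_le_exp, mul_assoc]
  exact mul_le_mul_of_nonneg_left (exp_sub_one_sub_le_sq_mul_exp_abs c) hlam

lemma centeredPoissonMgf_le_of_abs_eq_inv_sqrt {α lam c : ℝ} (hα : 0 < α) (hlam : α ≤ lam)
    (hc : |c| = (√lam)⁻¹) : centeredPoissonMgf lam c ≤ exp (exp (√α)⁻¹) := by
  have hlam0 : 0 < lam := hα.trans_le hlam
  calc centeredPoissonMgf lam c ≤ exp (lam * c ^ 2 * exp |c|) :=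
        centeredPoissonMgf_le hlam0.le c
    _ = exp (exp (√lam)⁻¹) := by
      rw [← sq_abs c, hc, inv_pow, sq_sqrt hlam0.le, mul_inv_cancel₀ hlam0.ne', one_mul]
    _ ≤ exp (exp (√α)⁻¹) := by gcongr

lemma tsum_poissonWeight_mul_abs_sub_rpow_le {lam c q : ℝ} (hlam : 0 ≤ lam) (hc : 0 < c)
    (hq : 0 ≤ q) :
    ∑' n : ℕ, poissonWeight lam n * |(n : ℝ) - lam| ^ q ≤
      (⌈q⌉₊)! * (centeredPoissonMgf lam c + centeredPoissonMgf lam (-c)) / c ^ q := by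
  have hpt (n : ℕ) : poissonWeight lam n * |(n : ℝ) - lam| ^ q ≤ (⌈q⌉₊)! / c ^ q *
      (poissonWeight lam n * exp (c * (n - lam)) +
        poissonWeight lam n * exp (-c * (n - lam))) := by
    have hscale : |(n : ℝ) - lam| ^ q = |c * (n - lam)| ^ q / c ^ q := by
      rw [abs_mul, mul_rpow (abs_nonneg c) (abs_nonneg _), abs_of_pos hc]
      field_simp
    calc poissonWeight lam n * |(n : ℝ) - lam| ^ q
        = poissonWeight lam n * |c * (n - lam)| ^ q / c ^ q := by rw [hscale, mul_div_assoc]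
      _ ≤ poissonWeight lam n * ((⌈q⌉₊)! * (exp (c * (n - lam)) + exp (-(c * (n - lam))))) /
          c ^ q := by
        gcongr
        · exact poissonWeight_nonneg hlam n
        · exact abs_rpow_le_factorial_mul_exp_add_exp hq _
      _ = _ := by rw [neg_mul]; ring
  have hR := ((hasSum_poissonWeight_mul_exp lam c).add
    (hasSum_poissonWeight_mul_exp lam (-c))).mul_left ((⌈q⌉₊)! / c ^ q)
  have hL : Summable fun n : ℕ => poissonWeight lam n * |(n : ℝ) - lam| ^ q :=
    hR.summable.of_nonneg_of_le
      (fun n => mul_nonneg (poissonWeight_nonneg hlam n) (by positivity)) hpt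
  calc _ ≤ (⌈q⌉₊)! / c ^ q * (centeredPoissonMgf lam c + centeredPoissonMgf lam (-c)) :=
        hasSum_le hpt hL.hasSum hR
    _ = _ := by ring

end PoissonMoment

/-- For every `α > 0` and real `q ≥ 1`, the normalized absolute centered Poisson moment
`λ ↦ E|Y_λ - λ|^q / λ^{q/2}` is bounded on `[α, ∞)`. -/
theorem poisson_abs_moment_bounded (α : ℝ) (hα : 0 < α) (q : ℝ) (hq : 1 ≤ q) :
    ∃ M : ℝ, ∀ lam : ℝ, α ≤ lam →
      (∑' n : ℕ, Real.exp (-lam) * lam ^ n / (n.factorial : ℝ) * |(n : ℝ) - lam| ^ q)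
        ≤ M * lam ^ (q / 2) := by
  refine ⟨(⌈q⌉₊).factorial * (2 * Real.exp (Real.exp (√α)⁻¹)), fun lam hlam => ?_⟩
  have hlam0 : 0 < lam := hα.trans_le hlam
  set c := (√lam)⁻¹
  have hc : 0 < c := by positivity
  have hcq : c ^ q = (lam ^ (q / 2))⁻¹ := by
    rw [Real.inv_rpow (Real.sqrt_nonneg lam), Real.sqrt_eq_rpow, ← Real.rpow_mul hlam0.le]
    ring_nf
  calc _ ≤ (⌈q⌉₊).factorial * (centeredPoissonMgf lam c + centeredPoissonMgf lam (-c)) /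
          c ^ q := tsum_poissonWeight_mul_abs_sub_rpow_le hlam0.le hc (by linarith)
    _ ≤ (⌈q⌉₊).factorial * (Real.exp (Real.exp (√α)⁻¹) + Real.exp (Real.exp (√α)⁻¹)) /
          c ^ q := by
        gcongr <;> refine centeredPoissonMgf_le_of_abs_eq_inv_sqrt hα hlam ?_
        · exact abs_of_pos hc
        · rw [abs_neg, abs_of_pos hc]
    _ = _ := by rw [hcq, div_inv_eq_mul]; ring

end
end
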